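/- arXiv:2107.08666 — 2 statements merged into one kernel-verified Lean document; each statement's English description precedes it below -/
import Mathlib

section
/- Let $p \in (0,1)$, $q \in (0,\infty]$, and $\nu > d(1/p - 1)$. Define for measurable $H : \mathbb{N} \times \mathbb{R}^d \to [0,\infty]$ the quasinorm $\mathcal{N}(H) = \left( \sum_{k \ge 0} \left( 2^{\nu k} \left\| x \mapsto \fint_{B(x, 2^{-k})} H(k,y)\,dy \right\|_{L^p(\mathbb{R}^d)} \right)^q \right)^{1/q}$. Then there is a constant $C$ depending only on $d, p, \nu$ such that for every $l \in \mathbb{N}$, $\mathcal{N}\left( (k,x) \mapsto \fint_{|z-x| \le 2^{-k}} H(k+l, z)\,dz \right) \leq C\, 2^{-\gamma l} \mathcal{N}(H)$, where $\gamma = \nu - d(1/p-1) > 0$. -/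
open MeasureTheory ENNReal

/-- `ℓ^q` (quasi)norm of a sequence in `ℝ≥0∞`, `q ∈ (0,∞]`,
with the usual modification for `q = ∞`. -/
noncomputable def lqNormE (q : ℝ≥0∞) (a : ℕ → ℝ≥0∞) : ℝ≥0∞ :=
  if q = ∞ then ⨆ k, a k
  else (∑' k, a k ^ q.toReal) ^ (1 / q.toReal)

/-- Average of an `ℝ≥0∞`-valued function over the ball `B(x, 2^{-k})`. -/
noncomputable def dyadicBallAvg {d : ℕ} (k : ℕ) (g : (Fin d → ℝ) → ℝ≥0∞)
    (x : Fin d → ℝ) : ℝ≥0∞ :=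
  (volume (Metric.ball x ((2 : ℝ) ^ (-(k : ℝ)))))⁻¹ *
    ∫⁻ z in Metric.ball x ((2 : ℝ) ^ (-(k : ℝ))), g z

/-- Besov-type quasinorm for `p < 1`, with an inner average:
`N(H) = ℓ^q_k 2^{νk} L^p_x ⨍_{B(x,2^{-k})} H(k,y) dy`. -/
noncomputable def besovNlt1 {d : ℕ} (p : ℝ) (q : ℝ≥0∞) (ν : ℝ)
    (H : ℕ → (Fin d → ℝ) → ℝ≥0∞) : ℝ≥0∞ :=
  lqNormE q (fun k =>
    (2 : ℝ≥0∞) ^ (ν * k) * (∫⁻ x, (dyadicBallAvg k (H k) x) ^ p) ^ (1 / p))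

/-!
Write `A_r f (x)` for the average of `f` over the sup-norm ball (a cube) `B(x, r)`. Pointwise,
`A_r (A_r f) ≤ 2^d A_{2r} f`. A ball of radius `n r` is covered by the `(2n+1)^d` balls of
radius `r` centred on the lattice `x + r ℤ^d`, so `A_{nr} f (x) ≤ n^{-d} ∑_j A_r f (x + r j)`;
`p`-subadditivity of `t ↦ t^p` and translation invariance of Lebesgue measure turn this into
`‖A_{nr} f‖_p^p ≤ n^{-dp} (2n+1)^d ‖A_r f‖_p^p`. With `r = 2^{-k-l}` and `n = 2^{l+1}` this gives
`‖A_k A_k H_{k+l}‖_p ≲ 2^{d(1/p-1) l} ‖A_{k+l} H_{k+l}‖_p`, and writing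
`2^{νk} = 2^{-νl} 2^{ν(k+l)}` and shifting the index in `ℓ^q` finishes the proof.
-/

open Metric

theorem ENNReal.rpow_finsetSum_le_sum_rpow {ι : Type*} (s : Finset ι) (a : ι → ℝ≥0∞) {p : ℝ}
    (hp0 : 0 < p) (hp1 : p ≤ 1) : (∑ i ∈ s, a i) ^ p ≤ ∑ i ∈ s, a i ^ p := by
  classical
  induction s using Finset.induction with
  | empty => simp [ENNReal.zero_rpow_of_pos hp0]
  | insert i s hi ih =>
    rw [Finset.sum_insert hi, Finset.sum_insert hi]
    exact (ENNReal.rpow_add_le_add_rpow _ _ hp0.le hp1).trans (add_le_add le_rfl ih)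

section lqNormE

variable {q : ℝ≥0∞}

theorem lqNormE_mono {a b : ℕ → ℝ≥0∞} (h : a ≤ b) : lqNormE q a ≤ lqNormE q b := by
  unfold lqNormE
  split_ifs
  · exact iSup_mono h
  · gcongr with k
    exact h k

theorem lqNormE_const_mul (hq : 0 < q) (c : ℝ≥0∞) (a : ℕ → ℝ≥0∞) :
    lqNormE q (fun k => c * a k) = c * lqNormE q a := by
  unfold lqNormE
  split_ifs with hq_top
  · exact (ENNReal.mul_iSup c a).symm
  · have hq0 : q.toReal ≠ 0 := (ENNReal.toReal_pos hq.ne' hq_top).ne'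
    simp_rw [ENNReal.mul_rpow_of_nonneg _ _ ENNReal.toReal_nonneg, ENNReal.tsum_mul_left,
      ENNReal.mul_rpow_of_nonneg _ _ (one_div_nonneg.2 ENNReal.toReal_nonneg), one_div,
      ENNReal.rpow_rpow_inv hq0]

theorem lqNormE_comp_add_le (a : ℕ → ℝ≥0∞) (l : ℕ) :
    lqNormE q (fun k => a (k + l)) ≤ lqNormE q a := by
  unfold lqNormE
  split_ifs
  · exact iSup_le fun k => le_iSup a (k + l)
  · gcongr ?_ ^ _
    exact ENNReal.tsum_comp_le_tsum_of_injective (add_left_injective l) (a · ^ q.toReal)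

end lqNormE

theorem measurable_setLIntegral_ball {α : Type*} [PseudoMetricSpace α] [MeasurableSpace α]
    [OpensMeasurableSpace α] [SecondCountableTopology α] (μ : Measure α) [SFinite μ]
    {g : α → ℝ≥0∞} (hg : Measurable g) (r : ℝ) :
    Measurable fun x => ∫⁻ z in ball x r, g z ∂μ := by
  have hU : MeasurableSet {xz : α × α | dist xz.2 xz.1 < r} :=
    (isOpen_lt (continuous_snd.dist continuous_fst) continuous_const).measurableSet
  have h : ∀ x, ∫⁻ z in ball x r, g z ∂μ =
      ∫⁻ z, {xz : α × α | dist xz.2 xz.1 < r}.indicator (fun xz => g xz.2) (x, z) ∂μ := by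
    intro x
    rw [← lintegral_indicator measurableSet_ball]
    rfl
  simp_rw [h]
  exact ((hg.comp measurable_snd).indicator hU).lintegral_prod_right'

section BallAverage

variable {ι : Type*} [Fintype ι]

theorem volume_ball_natCast_mul (x y : ι → ℝ) {r : ℝ} (hr : 0 < r) {n : ℕ} (hn : 0 < n) :
    volume (ball x (n * r)) = (n : ℝ≥0∞) ^ Fintype.card ι * volume (ball y r) := by
  rw [Real.volume_pi_ball x (by positivity), Real.volume_pi_ball y hr, mul_left_comm, mul_pow,
    ENNReal.ofReal_mul (by positivity), ENNReal.ofReal_pow n.cast_nonneg, ENNReal.ofReal_natCast]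

theorem measurable_setLAverage_ball {g : (ι → ℝ) → ℝ≥0∞} (hg : Measurable g) {r : ℝ}
    (hr : 0 < r) : Measurable fun x : ι → ℝ => ⨍⁻ z in ball x r, g z ∂volume := by
  simp_rw [setLAverage_eq, Real.volume_pi_ball _ hr]
  exact (measurable_setLIntegral_ball volume hg r).div_const _

theorem setLAverage_ball_le_of_mem {r : ℝ} (hr : 0 < r) (g : (ι → ℝ) → ℝ≥0∞) {x y : ι → ℝ}
    (hy : y ∈ ball x r) :
    ⨍⁻ z in ball y r, g z ∂volume ≤ 2 ^ Fintype.card ι * ⨍⁻ z in ball x (2 * r), g z ∂volume := by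
  have hvol := volume_ball_natCast_mul x y hr two_pos
  simp only [Nat.cast_ofNat] at hvol
  rw [setLAverage_eq, setLAverage_eq, hvol, ← mul_div_assoc,
    ENNReal.mul_div_mul_left _ _ (by simp) (by simp)]
  gcongr
  refine ball_subset_ball' ?_
  linarith [mem_ball.1 hy]

theorem card_fun_Icc_neg_natCast [DecidableEq ι] (n : ℕ) :
    Fintype.card (ι → Set.Icc (-(n : ℤ)) n) = (2 * n + 1) ^ Fintype.card ι := by
  rw [Fintype.card_fun]
  congr 1
  have h := Int.card_fintype_Icc_of_le (a := -(n : ℤ)) (b := n) (by omega)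
  omega

theorem setLAverage_ball_setLAverage_ball_le {r : ℝ} (hr : 0 < r) (g : (ι → ℝ) → ℝ≥0∞)
    (x : ι → ℝ) :
    ⨍⁻ y in ball x r, (⨍⁻ z in ball y r, g z ∂volume) ∂volume ≤
      2 ^ Fintype.card ι * ⨍⁻ z in ball x (2 * r), g z ∂volume :=
  calc _ ≤ ⨍⁻ _y in ball x r, (2 ^ Fintype.card ι * ⨍⁻ z in ball x (2 * r), g z ∂volume) ∂volume :=
        laverage_mono_ae <| (ae_restrict_iff' measurableSet_ball).2 <|
          ae_of_all _ fun _ hy => setLAverage_ball_le_of_mem hr g hy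
    _ = _ := setLAverage_const (measure_ball_pos volume x hr).ne' measure_ball_lt_top.ne _

def latticePoint {n : ℕ} (r : ℝ) (j : ι → Set.Icc (-(n : ℤ)) n) : ι → ℝ :=
  fun i => r * (j i : ℤ)

theorem ball_natCast_mul_subset_iUnion (x : ι → ℝ) {r : ℝ} (hr : 0 < r) (n : ℕ) :
    ball x (n * r) ⊆ ⋃ j : ι → Set.Icc (-(n : ℤ)) n, ball (x + latticePoint r j) r := by
  intro z hz
  set t : ι → ℝ := fun i => (z i - x i) / r
  have ht : ∀ i, |t i| < n := fun i => by
    rw [abs_div, abs_of_pos hr, div_lt_iff₀ hr, ← Real.dist_eq]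
    exact (dist_le_pi_dist z x i).trans_lt hz
  refine Set.mem_iUnion.2 ⟨fun i => ⟨round (t i), ?_, ?_⟩, ?_⟩
  · have hlow : -(n : ℝ) - 1 < round (t i) := by
      linarith [sub_half_lt_round (t i), (abs_lt.1 (ht i)).1]
    have hlow_int : -(n : ℤ) - 1 < round (t i) := by exact_mod_cast hlow
    omega
  · have hup : (round (t i) : ℝ) < n + 1 := by
      linarith [round_le_add_half (t i), (abs_lt.1 (ht i)).2]
    have hup_int : round (t i) < (n : ℤ) + 1 := by exact_mod_cast hup
    omega
  · rw [mem_ball, dist_pi_lt_iff hr]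
    intro i
    have hdiff : z i - (x i + r * round (t i)) = r * (t i - round (t i)) := by
      simp only [t]; field_simp; ring
    rw [Real.dist_eq, Pi.add_apply, latticePoint, hdiff, abs_mul, abs_of_pos hr]
    nlinarith [abs_sub_round (t i)]

theorem setLAverage_ball_natCast_mul_le_sum [DecidableEq ι] {r : ℝ} (hr : 0 < r) {n : ℕ}
    (hn : 0 < n) (g : (ι → ℝ) → ℝ≥0∞) (x : ι → ℝ) :
    ⨍⁻ z in ball x (n * r), g z ∂volume ≤ ((n : ℝ≥0∞) ^ Fintype.card ι)⁻¹ *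
      ∑ j : ι → Set.Icc (-(n : ℤ)) n, ⨍⁻ z in ball (x + latticePoint r j) r, g z ∂volume := by
  have hnc : (n : ℝ≥0∞) ^ Fintype.card ι ≠ 0 := by simp [hn.ne']
  have hnc_top : (n : ℝ≥0∞) ^ Fintype.card ι ≠ ∞ := by simp
  rw [setLAverage_eq, volume_ball_natCast_mul x x hr hn, ENNReal.div_le_iff
    (mul_ne_zero hnc (measure_ball_pos volume x hr).ne')
    (ENNReal.mul_ne_top hnc_top measure_ball_lt_top.ne)]
  calc ∫⁻ z in ball x (n * r), g z
      ≤ ∫⁻ z in ⋃ j : ι → Set.Icc (-(n : ℤ)) n, ball (x + latticePoint r j) r, g z :=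
        lintegral_mono_set (ball_natCast_mul_subset_iUnion x hr n)
    _ ≤ ∑ j : ι → Set.Icc (-(n : ℤ)) n,
          ∫⁻ z in ball (x + latticePoint r j) r, g z :=
        (lintegral_iUnion_le _ _).trans_eq (tsum_fintype _)
    _ = (∑ j : ι → Set.Icc (-(n : ℤ)) n,
          ⨍⁻ z in ball (x + latticePoint r j) r, g z ∂volume) * volume (ball x r) := by
        rw [Finset.sum_mul]
        refine Finset.sum_congr rfl fun j _ => ?_
        rw [← measure_mul_setLAverage _ measure_ball_lt_top.ne, mul_comm, Real.volume_pi_ball _ hr,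
          Real.volume_pi_ball _ hr]
    _ = _ := by rw [mul_mul_mul_comm, ENNReal.inv_mul_cancel hnc hnc_top, one_mul]

theorem lintegral_setLAverage_ball_natCast_mul_rpow_le [DecidableEq ι] {p : ℝ} (hp0 : 0 < p)
    (hp1 : p ≤ 1) {g : (ι → ℝ) → ℝ≥0∞} (hg : Measurable g) {r : ℝ} (hr : 0 < r) {n : ℕ}
    (hn : 0 < n) :
    ∫⁻ x, (⨍⁻ z in ball x (n * r), g z ∂volume) ^ p ≤
      ((n : ℝ≥0∞) ^ Fintype.card ι)⁻¹ ^ p * (2 * n + 1) ^ Fintype.card ι *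
        ∫⁻ x, (⨍⁻ z in ball x r, g z ∂volume) ^ p := by
  set c := ((n : ℝ≥0∞) ^ Fintype.card ι)⁻¹
  set A : (ι → ℝ) → ℝ≥0∞ := fun x => ⨍⁻ z in ball x r, g z ∂volume
  have hA : Measurable fun x => A x ^ p := (measurable_setLAverage_ball hg hr).pow_const p
  have hc : c ^ p ≠ ∞ := ENNReal.rpow_ne_top_of_nonneg hp0.le (by simp [c, hn.ne'])
  have hpointwise : ∀ x, (⨍⁻ z in ball x (n * r), g z ∂volume) ^ p ≤
      c ^ p * ∑ j : ι → Set.Icc (-(n : ℤ)) n, A (x + latticePoint r j) ^ p := by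
    intro x
    calc (⨍⁻ z in ball x (n * r), g z ∂volume) ^ p
        ≤ (c * ∑ j : ι → Set.Icc (-(n : ℤ)) n, A (x + latticePoint r j)) ^ p := by
          gcongr
          exact setLAverage_ball_natCast_mul_le_sum hr hn g x
      _ ≤ _ := by
          rw [ENNReal.mul_rpow_of_nonneg _ _ hp0.le]
          gcongr
          exact ENNReal.rpow_finsetSum_le_sum_rpow _ _ hp0 hp1
  calc ∫⁻ x, (⨍⁻ z in ball x (n * r), g z ∂volume) ^ p
      ≤ ∫⁻ x, c ^ p * ∑ j : ι → Set.Icc (-(n : ℤ)) n, A (x + latticePoint r j) ^ p :=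
        lintegral_mono hpointwise
    _ = c ^ p * ∑ _j : ι → Set.Icc (-(n : ℤ)) n, ∫⁻ x, A x ^ p := by
        rw [lintegral_const_mul' _ _ hc, lintegral_finsetSum']
        · simp_rw [lintegral_add_right_eq_self (fun x => A x ^ p)]
        · exact fun j _ => (hA.comp (measurable_add_const _)).aemeasurable
    _ = _ := by
        rw [Finset.sum_const, Finset.card_univ, card_fun_Icc_neg_natCast, nsmul_eq_mul, mul_assoc]
        push_cast
        rfl

end BallAverage

theorem dyadicBallAvg_eq_setLAverage {d : ℕ} (k : ℕ) (g : (Fin d → ℝ) → ℝ≥0∞) (x : Fin d → ℝ) :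
    dyadicBallAvg k g x = ⨍⁻ z in ball x (2 ^ (-(k : ℝ))), g z ∂volume := by
  rw [dyadicBallAvg, setLAverage_eq, ENNReal.div_eq_inv_mul]

theorem dyadic_covering_constant_le (d l : ℕ) (p : ℝ) :
    (2 ^ d : ℝ≥0∞) ^ p * (((2 ^ (l + 1) : ℕ) : ℝ≥0∞) ^ d)⁻¹ ^ p *
        (2 * ((2 ^ (l + 1) : ℕ) : ℝ≥0∞) + 1) ^ d ≤
      2 ^ (3 * d + d * (1 - p) * l : ℝ) := by
  have hcount : (2 * (2 : ℝ≥0∞) ^ (l + 1) + 1) ^ d ≤ 2 ^ (((l + 3) * d : ℕ) : ℝ) := by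
    rw [ENNReal.rpow_natCast, pow_mul]
    gcongr
    have := Nat.one_le_two_pow (n := l + 1)
    exact_mod_cast show 2 * 2 ^ (l + 1) + 1 ≤ 2 ^ (l + 3) by
      rw [pow_succ _ (l + 2), pow_succ _ (l + 1)]; linarith
  calc _ ≤ (2 : ℝ≥0∞) ^ ((d : ℝ) * p) * (2 : ℝ≥0∞) ^ (-(((l + 1) * d : ℕ) : ℝ) * p) *
        2 ^ (((l + 3) * d : ℕ) : ℝ) := by
        rw [ENNReal.rpow_mul, ENNReal.rpow_mul, ENNReal.rpow_neg, ENNReal.rpow_natCast,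
          ENNReal.rpow_natCast, pow_mul, Nat.cast_pow, Nat.cast_ofNat]
        gcongr
    _ = _ := by
        rw [← ENNReal.rpow_add _ _ two_ne_zero ENNReal.ofNat_ne_top,
          ← ENNReal.rpow_add _ _ two_ne_zero ENNReal.ofNat_ne_top]
        congr 1
        push_cast
        ring

theorem lintegral_dyadicBallAvg_dyadicBallAvg_rpow_le {d : ℕ} {p : ℝ} (hp0 : 0 < p)
    (hp1 : p ≤ 1) {f : (Fin d → ℝ) → ℝ≥0∞} (hf : Measurable f) (k l : ℕ) :
    ∫⁻ x, dyadicBallAvg k (dyadicBallAvg k f) x ^ p ≤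
      2 ^ (3 * d + d * (1 - p) * l : ℝ) * ∫⁻ x, dyadicBallAvg (k + l) f x ^ p := by
  set n : ℕ := 2 ^ (l + 1)
  set r : ℝ := 2 ^ (-((k + l : ℕ) : ℝ))
  have hr : 0 < r := by positivity
  have hnr : 2 * (2 : ℝ) ^ (-(k : ℝ)) = n * r := by
    have hn : (n : ℝ) = 2 ^ ((l + 1 : ℕ) : ℝ) := by rw [Real.rpow_natCast]; push_cast [n]; rfl
    rw [hn, ← Real.rpow_add two_pos, mul_comm, ← Real.rpow_add_one two_ne_zero]
    congr 1
    push_cast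
    ring
  have hdouble : ∀ x, dyadicBallAvg k (dyadicBallAvg k f) x ^ p ≤
      (2 ^ d : ℝ≥0∞) ^ p * (⨍⁻ z in ball x (n * r), f z ∂volume) ^ p := by
    intro x
    rw [← ENNReal.mul_rpow_of_nonneg _ _ hp0.le, ← hnr]
    gcongr
    simp_rw [dyadicBallAvg_eq_setLAverage]
    simpa using setLAverage_ball_setLAverage_ball_le (by positivity) f x
  calc ∫⁻ x, dyadicBallAvg k (dyadicBallAvg k f) x ^ p
      ≤ ∫⁻ x, (2 ^ d : ℝ≥0∞) ^ p * (⨍⁻ z in ball x (n * r), f z ∂volume) ^ p :=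
        lintegral_mono hdouble
    _ ≤ (2 ^ d : ℝ≥0∞) ^ p * ((((n : ℝ≥0∞) ^ d)⁻¹ ^ p * (2 * n + 1) ^ d) *
          ∫⁻ x, (⨍⁻ z in ball x r, f z ∂volume) ^ p) := by
        rw [lintegral_const_mul' _ _ (by simp)]
        gcongr
        simpa using lintegral_setLAverage_ball_natCast_mul_rpow_le hp0 hp1 hf hr (by positivity)
    _ ≤ _ := by
        simp_rw [← mul_assoc, dyadicBallAvg_eq_setLAverage]
        gcongr
        exact dyadic_covering_constant_le d l p

theorem two_rpow_mul_lintegral_dyadicBallAvg_dyadicBallAvg_le {d : ℕ} {p : ℝ} (hp0 : 0 < p)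
    (hp1 : p ≤ 1) (ν : ℝ) {f : (Fin d → ℝ) → ℝ≥0∞} (hf : Measurable f) (k l : ℕ) :
    2 ^ (ν * k) * (∫⁻ x, dyadicBallAvg k (dyadicBallAvg k f) x ^ p) ^ (1 / p) ≤
      2 ^ (3 * d / p) * 2 ^ (-((ν - d * (1 / p - 1)) * l)) *
        (2 ^ (ν * (k + l : ℕ)) * (∫⁻ x, dyadicBallAvg (k + l) f x ^ p) ^ (1 / p)) :=
  calc _ ≤ 2 ^ (ν * k) * (2 ^ (3 * d + d * (1 - p) * l : ℝ) *
        ∫⁻ x, dyadicBallAvg (k + l) f x ^ p) ^ (1 / p) := by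
        gcongr
        exact lintegral_dyadicBallAvg_dyadicBallAvg_rpow_le hp0 hp1 hf k l
    _ = _ := by
        rw [ENNReal.mul_rpow_of_nonneg _ _ (by positivity), ← ENNReal.rpow_mul, ← mul_assoc,
          ← mul_assoc, ← ENNReal.rpow_add _ _ two_ne_zero ENNReal.ofNat_ne_top,
          ← ENNReal.rpow_add _ _ two_ne_zero ENNReal.ofNat_ne_top,
          ← ENNReal.rpow_add _ _ two_ne_zero ENNReal.ofNat_ne_top]
        congr 2
        push_cast
        field_simp
        ring

theorem besov_scaling_p_lt_one_general {d : ℕ} (p : ℝ) (hp0 : 0 < p) (hp1 : p < 1)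
    (q : ℝ≥0∞) (hq : 0 < q) (ν : ℝ) :
    ∃ C : ℝ≥0∞, C ≠ ∞ ∧
      ∀ (H : ℕ → (Fin d → ℝ) → ℝ≥0∞), (∀ k, Measurable (H k)) →
      ∀ l : ℕ,
        besovNlt1 p q ν (fun k x => dyadicBallAvg k (H (k + l)) x)
          ≤ C * (2 : ℝ≥0∞) ^ (-((ν - (d : ℝ) * (1 / p - 1)) * l)) * besovNlt1 p q ν H := by
  refine ⟨2 ^ (3 * d / p), ENNReal.rpow_ne_top_of_nonneg (by positivity) ENNReal.ofNat_ne_top,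
    fun H hH l => ?_⟩
  set b : ℕ → ℝ≥0∞ := fun k => 2 ^ (ν * k) * (∫⁻ x, dyadicBallAvg k (H k) x ^ p) ^ (1 / p)
  calc besovNlt1 p q ν (fun k x => dyadicBallAvg k (H (k + l)) x)
      ≤ lqNormE q (fun k => 2 ^ (3 * d / p) * 2 ^ (-((ν - d * (1 / p - 1)) * l)) * b (k + l)) :=
        lqNormE_mono fun k =>
          two_rpow_mul_lintegral_dyadicBallAvg_dyadicBallAvg_le hp0 hp1.le ν (hH (k + l)) k l
    _ = 2 ^ (3 * d / p) * 2 ^ (-((ν - d * (1 / p - 1)) * l)) * lqNormE q (fun k => b (k + l)) :=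
        lqNormE_const_mul hq _ _
    _ ≤ _ := by
        gcongr
        exact lqNormE_comp_add_le b l

/-- Scaling property of the Besov quasinorm for `p ∈ (0,1)`, `q ∈ (0,∞]`,
`ν > d(1/p - 1)`: averaging `H(k+l, ·)` over balls of radius `2^{-k}` gains a factor
`2^{-γl}` with `γ = ν - d(1/p - 1)`, up to a constant depending only on `d, p, ν`. -/
theorem besov_scaling_p_lt_one {d : ℕ} (p : ℝ) (hp0 : 0 < p) (hp1 : p < 1)
    (q : ℝ≥0∞) (hq : 0 < q) (ν : ℝ) (hν : (d : ℝ) * (1 / p - 1) < ν) :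
    ∃ C : ℝ≥0∞, C ≠ ∞ ∧
      ∀ (H : ℕ → (Fin d → ℝ) → ℝ≥0∞), (∀ k, Measurable (H k)) →
      ∀ l : ℕ,
        besovNlt1 p q ν (fun k x => dyadicBallAvg k (H (k + l)) x)
          ≤ C * (2 : ℝ≥0∞) ^ (-((ν - (d : ℝ) * (1 / p - 1)) * l)) * besovNlt1 p q ν H :=
  besov_scaling_p_lt_one_general p hp0 hp1 q hq ν
end

section
/- Let $A : \mathbb{R} \times \mathbb{R} \to \mathbb{R}$ be continuously differentiable in the second variable, with $D_2 A$ denoting this partial derivative. Let $\varphi \in C_c^\infty(\mathbb{R})$ be supported in $B(0,1/2)$ with $\int \varphi = 1$, and set $\varphi_z^{(k)}(y) = 2^k \varphi(2^k(y - z))$. Then for all $x, h \in \mathbb{R}$ and $k \in \mathbb{N}$: $\left| \int (D_2 A(x, y) - D_2 A(x+h, y)) \varphi_{x+h}^{(k)}(y)\,dy \right| \leq C 2^{k} \fint_{B(x+h, 2^{-k-1})} |\delta A(x, x+h, y)|\,dy$, where $\delta A(s,u,t) = A(s,t) - A(s,u) - A(u,t)$ and $C$ depends only on $\varphi$. -/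
open MeasureTheory

set_option maxHeartbeats 1000000 in
/-- Coherence estimate for the family `F_x = D₂A(x,·)`: testing the difference
`D₂A(x,·) - D₂A(x+h,·)` against `φ^{(k)}_{x+h}` is controlled by the average of
`|δA(x, x+h, ·)|` over `B(x+h, 2^{-k-1})`, with constant depending only on `φ`. -/
theorem coherence_from_deltaA (φ : ℝ → ℝ) (hφs : ContDiff ℝ (⊤ : ℕ∞) φ)
    (hφsupp : tsupport φ ⊆ Metric.ball 0 (1 / 2)) (hφ1 : ∫ y, φ y = 1) :
    ∃ C : ℝ, 0 < C ∧
      ∀ (A D2A : ℝ → ℝ → ℝ),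
        (∀ x y, HasDerivAt (A x) (D2A x y) y) →
        (∀ x, Continuous (D2A x)) →
        ∀ (x h : ℝ) (k : ℕ),
          |∫ y, (D2A x y - D2A (x + h) y) *
              ((2 : ℝ) ^ k * φ ((2 : ℝ) ^ k * (y - (x + h))))| ≤
            C * (2 : ℝ) ^ k *
              ⨍ y in Metric.ball (x + h) ((2 : ℝ) ^ (-(k : ℝ) - 1)),
                |A x y - A x (x + h) - A (x + h) y| := by
  have hφd : Differentiable ℝ φ := hφs.differentiable (by simp)
  have hφc : Continuous φ := hφd.continuous
  have hφ'c : Continuous (deriv φ) := hφs.continuous_deriv (by simp)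
  have hφcs : HasCompactSupport φ :=
    Metric.isCompact_of_isClosed_isBounded (isClosed_tsupport φ)
      (Metric.isBounded_ball.subset hφsupp)
  obtain ⟨M0, hM0⟩ := (hφcs.deriv).exists_bound_of_continuous hφ'c
  set M : ℝ := max M0 1 with hM
  have hM1 : (1 : ℝ) ≤ M := le_max_right _ _
  have hMpos : 0 < M := lt_of_lt_of_le one_pos hM1
  have hMb : ∀ t, |deriv φ t| ≤ M := fun t =>
    le_trans (by simpa using hM0 t) (le_max_left _ _)
  refine ⟨M, hMpos, fun A D2A hA hD2A x h k => ?_⟩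
  set z : ℝ := x + h with hz
  set r : ℝ := (2 : ℝ) ^ (-(k : ℝ) - 1) with hr
  have hrpos : 0 < r := Real.rpow_pos_of_pos two_pos _
  have h2kr : (2 : ℝ) ^ k * r = 1 / 2 := by
    rw [hr, ← Real.rpow_natCast (2 : ℝ) k, ← Real.rpow_add two_pos]
    have : (k:ℝ) + (-(k:ℝ) - 1) = -1 := by ring
    rw [this, Real.rpow_neg_one]
    norm_num
  set a : ℝ := z - r with ha
  set b : ℝ := z + r with hb
  have hab : a ≤ b := by simp [ha, hb]; linarith
  -- the mollifier and its derivative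
  set ψ : ℝ → ℝ := fun y => (2 : ℝ) ^ k * φ ((2 : ℝ) ^ k * (y - z)) with hψ
  set ψ' : ℝ → ℝ := fun y => (2 : ℝ) ^ k * (deriv φ ((2 : ℝ) ^ k * (y - z)) * (2 : ℝ) ^ k)
    with hψ'
  have hψd : ∀ y, HasDerivAt ψ (ψ' y) y := by
    intro y
    have h1 : HasDerivAt (fun y : ℝ => (2 : ℝ) ^ k * (y - z)) ((2 : ℝ) ^ k) y := by
      simpa using (((hasDerivAt_id y).sub_const z).const_mul ((2 : ℝ) ^ k))
    have h2 := ((hφd _).hasDerivAt.comp y h1).const_mul ((2 : ℝ) ^ k)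
    simpa [ψ, ψ', Function.comp] using h2
  -- outside the ball, the argument of φ is outside `tsupport φ`
  have hout : ∀ y : ℝ, y ∉ Metric.ball z r → (2 : ℝ) ^ k * (y - z) ∉ tsupport φ := by
    intro y hy hmem
    have := hφsupp hmem
    rw [Metric.mem_ball, Real.dist_eq, sub_zero, abs_mul, abs_of_pos (by positivity :
      (0:ℝ) < (2:ℝ)^k)] at this
    rw [Metric.mem_ball, Real.dist_eq, not_lt] at hy
    have : (2 : ℝ) ^ k * |y - z| < (2 : ℝ) ^ k * r := by
      rw [h2kr]; exact this
    have := lt_of_mul_lt_mul_left this (by positivity)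
    linarith
  have hψ0 : ∀ y : ℝ, y ∉ Metric.ball z r → ψ y = 0 := by
    intro y hy
    have := image_eq_zero_of_notMem_tsupport (hout y hy)
    simp [ψ, this]
  have hψ'0 : ∀ y : ℝ, y ∉ Metric.ball z r → ψ' y = 0 := by
    intro y hy
    have : deriv φ ((2 : ℝ) ^ k * (y - z)) = 0 := by
      have hsub : Function.support (deriv φ) ⊆ tsupport φ := support_deriv_subset
      by_contra hne
      exact hout y hy (hsub hne)
    simp [ψ', this]
  have hball : Metric.ball z r = Set.Ioo a b := by
    rw [Real.ball_eq_Ioo]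
  have hanotin : a ∉ Metric.ball z r := by rw [hball]; simp
  have hbnotin : b ∉ Metric.ball z r := by rw [hball]; simp
  -- δA and its derivative
  set g : ℝ → ℝ := fun y => A x y - A x z - A z y with hg
  set g' : ℝ → ℝ := fun y => D2A x y - D2A z y with hg'
  have hgd : ∀ y, HasDerivAt g (g' y) y := fun y =>
    (((hA x y).sub_const (A x z)).sub (hA z y))
  have hg'c : Continuous g' := (hD2A x).sub (hD2A z)
  have hgc : Continuous g := by
    have : Differentiable ℝ g := fun y => (hgd y).differentiableAt
    exact this.continuous
  have hψ'c : Continuous ψ' := by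
    apply Continuous.mul continuous_const
    exact (hφ'c.comp (by continuity)).mul continuous_const
  have hψc : Continuous ψ := by
    apply Continuous.mul continuous_const
    exact hφc.comp (by continuity)
  -- restrict the integral to the interval
  have hzero : ∀ y : ℝ, y ∉ Set.Ioc a b → g' y * ψ y = 0 := by
    intro y hy
    have : y ∉ Metric.ball z r := by
      rw [hball]; intro hmem; exact hy ⟨hmem.1, le_of_lt hmem.2⟩
    rw [hψ0 y this, mul_zero]
  have hstep1 : ∫ y, (D2A x y - D2A z y) * ψ y = ∫ y in a..b, g' y * ψ y := by
    rw [intervalIntegral.integral_of_le hab,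
      setIntegral_eq_integral_of_forall_compl_eq_zero hzero]
  -- integration by parts
  have hibp : ∫ y in a..b, g' y * ψ y = -∫ y in a..b, g y * ψ' y := by
    have := intervalIntegral.integral_mul_deriv_eq_deriv_mul
      (u := g) (v := ψ) (u' := g') (v' := ψ') (a := a) (b := b)
      (fun y _ => hgd y) (fun y _ => hψd y)
      (hg'c.intervalIntegrable a b) (hψ'c.intervalIntegrable a b)
    rw [hψ0 a hanotin, hψ0 b hbnotin] at this
    simp only [mul_zero, sub_zero, zero_sub] at this
    linarith [this]
  -- bound the integral of g * ψ'
  have hbound : |∫ y in a..b, g y * ψ' y| ≤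
      (∫ y in a..b, |g y|) * ((2 : ℝ) ^ k * (M * (2 : ℝ) ^ k)) := by
    calc |∫ y in a..b, g y * ψ' y| ≤ ∫ y in a..b, |g y * ψ' y| :=
          intervalIntegral.abs_integral_le_integral_abs hab
      _ ≤ ∫ y in a..b, |g y| * ((2 : ℝ) ^ k * (M * (2 : ℝ) ^ k)) := by
          apply intervalIntegral.integral_mono_on hab
          · exact ((hgc.mul hψ'c).abs).intervalIntegrable a b
          · exact (hgc.abs.mul continuous_const).intervalIntegrable a b
          · intro y _
            rw [abs_mul]
            apply mul_le_mul_of_nonneg_left _ (abs_nonneg _)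
            have : |ψ' y| ≤ (2:ℝ)^k * (M * (2:ℝ)^k) := by
              rw [hψ']
              simp only [abs_mul]
              rw [abs_of_pos (by positivity : (0:ℝ) < (2:ℝ)^k)]
              apply mul_le_mul_of_nonneg_left _ (by positivity)
              exact mul_le_mul_of_nonneg_right (hMb _) (by positivity)
            exact this
      _ = (∫ y in a..b, |g y|) * ((2 : ℝ) ^ k * (M * (2 : ℝ) ^ k)) := by
          rw [intervalIntegral.integral_mul_const]
  -- relate the interval integral of |g| to the average over the ball
  have hvol : (volume (Metric.ball z r)).toReal = 2 * r := by
    rw [Real.volume_ball, ENNReal.toReal_ofReal (by positivity)]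
  have havg : ∫ y in a..b, |g y| =
      (2 * r) * ⨍ y in Metric.ball z r, |g y| := by
    rw [setAverage_eq, smul_eq_mul, measureReal_def, hvol, ← mul_assoc,
      mul_inv_cancel₀ (by positivity : (2:ℝ) * r ≠ 0), one_mul]
    rw [intervalIntegral.integral_of_le hab, hball, ← integral_Ioc_eq_integral_Ioo]
  -- put everything together
  have havgnn : 0 ≤ ⨍ y in Metric.ball z r, |g y| := by
    rw [setAverage_eq, smul_eq_mul]
    exact mul_nonneg (by positivity) (integral_nonneg fun y => abs_nonneg _)
  calc |∫ y, (D2A x y - D2A z y) * ψ y|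
      = |∫ y in a..b, g y * ψ' y| := by rw [hstep1, hibp, abs_neg]
    _ ≤ (∫ y in a..b, |g y|) * ((2 : ℝ) ^ k * (M * (2 : ℝ) ^ k)) := hbound
    _ = M * (2 : ℝ) ^ k * ⨍ y in Metric.ball z r, |g y| := by
        rw [havg]
        have h1 : (2:ℝ) * r * (2:ℝ)^k = 1 := by
          have h2 : (2:ℝ) * r * (2:ℝ)^k = 2 * ((2:ℝ)^k * r) := by ring
          rw [h2, h2kr]; norm_num
        linear_combination (⨍ y in Metric.ball z r, |g y|) * (M * (2:ℝ)^k) * h1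
end
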